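/- Let A be a strongly enforceable advice from s₀ with horizon H satisfying the optimality assumption. Then every action that is optimal at the root of the pruned unfolding is optimal in M at s₀: opt^H_{T(M,s₀,H,A)}(s₀) ⊆ opt^H_M(s₀). -/

import Mathlib

open Finset MeasureTheory Filter Asymptotics
open scoped BigOperators Classical ENNReal

noncomputable section

namespace PaperMCTS

variable {S A : Type}

/-- A (finite) Markov decision process: transition kernel `P`, reward `R`,
terminal reward `RT`. -/
structure MDP (S A : Type) where
  P : S → A → S → ℝ
  R : S → A → ℝ
  RT : S → ℝ

/-- `P s a` is a probability distribution on states, for every `s, a`. -/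
def MDP.IsProper [Fintype S] (M : MDP S A) : Prop :=
  (∀ s a s', 0 ≤ M.P s a s') ∧ ∀ s a, ∑ s', M.P s a s' = 1

/-- A path of length `i`: `i+1` states and `i` actions. -/
abbrev Path (S A : Type) (i : ℕ) : Type := (Fin (i + 1) → S) × (Fin i → A)

def Path.first {i : ℕ} (p : Path S A i) : S := p.1 0

def Path.lastState {i : ℕ} (p : Path S A i) : S := p.1 (Fin.last i)

/-- The prefix of length `j` of a path of length `i ≥ j`. -/
def Path.take {i : ℕ} (p : Path S A i) (j : ℕ) (h : j ≤ i) : Path S A j :=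
  (fun t => p.1 ⟨t, by have := t.isLt; omega⟩,
   fun t => p.2 ⟨t, by have := t.isLt; omega⟩)

/-- Extension of a path by one action and one state: `p · a s`. -/
def Path.snoc {i : ℕ} (p : Path S A i) (a : A) (s : S) : Path S A (i + 1) :=
  (fun t => if h : (t : ℕ) ≤ i then p.1 ⟨t, by omega⟩ else s,
   fun t => if h : (t : ℕ) < i then p.2 ⟨t, h⟩ else a)

/-- The path of length `0` at state `s`. -/
def constPath (s : S) : Path S A 0 := (fun _ => s, fun t => t.elim0)

/-- A path of the MDP: all stochastic steps have positive probability. -/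
def MDP.ValidPath (M : MDP S A) {i : ℕ} (p : Path S A i) : Prop :=
  ∀ t : Fin i, 0 < M.P (p.1 t.castSucc) (p.2 t) (p.1 t.succ)

/-- A (probabilistic) strategy maps every finite path to weights on actions. -/
def Strategy (S A : Type) : Type := ∀ i : ℕ, Path S A i → A → ℝ

def IsStrategy [Fintype A] (σ : Strategy S A) : Prop :=
  (∀ i p a, 0 ≤ σ i p a) ∧ ∀ i p, ∑ a, σ i p a = 1

/-- A strategy is deterministic if each of its distributions has singleton support. -/
def Deterministic (σ : Strategy S A) : Prop :=
  ∀ (i : ℕ) (p : Path S A i), ∃ a, ∀ b, (0 < σ i p b ↔ b = a)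

/-- Probability `Pr^i_{M,σ}(p) = ∏_t σ(p|_t)(a_t) · P(s_t,a_t)(s_{t+1})`. -/
def pathProb (M : MDP S A) (σ : Strategy S A) {i : ℕ} (p : Path S A i) : ℝ :=
  ∏ t : Fin i,
    σ t (Path.take p t t.isLt.le) (p.2 t) * M.P (p.1 t.castSucc) (p.2 t) (p.1 t.succ)

/-- Compatibility with a probabilistic strategy: all played actions are in the support. -/
def CompatStrat (σ : Strategy S A) {i : ℕ} (p : Path S A i) : Prop :=
  ∀ t : Fin i, 0 < σ t (Path.take p t t.isLt.le) (p.2 t)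

/-- Total reward of a path. -/
def pathReward (M : MDP S A) {i : ℕ} (p : Path S A i) : ℝ :=
  (∑ t : Fin i, M.R (p.1 t.castSucc) (p.2 t)) + M.RT (Path.lastState p)

/-- Expected total reward of strategy `σ` with horizon `i` from `s`. -/
def ValStrat [Fintype S] [Fintype A] (M : MDP S A) (σ : Strategy S A) (i : ℕ) (s : S) : ℝ :=
  ∑ p : Path S A i, if Path.first p = s then pathProb M σ p * pathReward M p else 0

/-- Optimal expected total reward of horizon `i` from `s`. -/
def MDP.Val [Fintype S] [Fintype A] (M : MDP S A) (i : ℕ) (s : S) : ℝ :=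
  ⨆ σ : {σ : Strategy S A // IsStrategy σ}, ValStrat M σ.1 i s

/-- Optimal actions: maximizers in the value-iteration recurrence (`opt^{k+1}`). -/
def MDP.optA [Fintype S] [Fintype A] (M : MDP S A) (k : ℕ) (s : S) : Set A :=
  {a | ∀ b, M.R s b + ∑ s', M.P s b s' * M.Val k s' ≤
        M.R s a + ∑ s', M.P s a s' * M.Val k s'}

/-- States of the depth-`H` tree unfolding: paths of length at most `H`. -/
abbrev UState (S A : Type) (H : ℕ) : Type := Σ i : Fin (H + 1), Path S A (i : ℕ)

def UState.root (H : ℕ) (s₀ : S) : UState S A H := ⟨⟨0, by omega⟩, constPath s₀⟩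

/-- Depth-`H` tree unfolding of an MDP (with self loops at the leaves). -/
def MDP.unfold (M : MDP S A) (H : ℕ) : MDP (UState S A H) A where
  P := fun q a q' =>
    if h : (q.1 : ℕ) < H then
      if q' = ⟨⟨(q.1 : ℕ) + 1, by omega⟩, Path.snoc q.2 a (Path.lastState q'.2)⟩ then
        M.P (Path.lastState q.2) a (Path.lastState q'.2)
      else 0
    else if q' = q then 1 else 0
  R := fun q a => if (q.1 : ℕ) < H then M.R (Path.lastState q.2) a else 0
  RT := fun q => M.RT (Path.lastState q.2)

/-- A symbolic advice: a predicate on finite paths. -/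
def Advice (S A : Type) : Type := ∀ i : ℕ, Path S A i → Prop

/-- A nondeterministic strategy. -/
def NStrategy (S A : Type) : Type := ∀ i : ℕ, Path S A i → Set A

/-- The nondeterministic strategy `σ_A^H` induced by an advice. -/
def advStrat (M : MDP S A) (Adv : Advice S A) (H : ℕ) : NStrategy S A := fun i p =>
  if h : i < H then
    {a | ∃ q : Path S A H, Adv H q ∧ Path.take q i h.le = p ∧ q.2 ⟨i, h⟩ = a ∧
      ∀ t : Fin H, i ≤ (t : ℕ) → 0 < M.P (q.1 t.castSucc) (q.2 t) (q.1 t.succ)}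
  else Set.univ

/-- The nondeterministic environment strategy `τ_A^H` induced by an advice. -/
def envStrat (M : MDP S A) (Adv : Advice S A) (H : ℕ) :
    ∀ i : ℕ, Path S A i → A → Set S := fun i p a =>
  if h : i < H then
    {s | 0 < M.P (Path.lastState p) a s ∧
      ∃ q : Path S A H, Adv H q ∧ Path.take q i h.le = p ∧ q.2 ⟨i, h⟩ = a ∧
        q.1 ⟨i + 1, by omega⟩ = s ∧
        ∀ t : Fin H, i ≤ (t : ℕ) → 0 < M.P (q.1 t.castSucc) (q.2 t) (q.1 t.succ)}
  else {s | 0 < M.P (Path.lastState p) a s}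

/-- Compatibility with a nondeterministic strategy. -/
def CompatN (σ : NStrategy S A) {i : ℕ} (p : Path S A i) : Prop :=
  ∀ t : Fin i, p.2 t ∈ σ t (Path.take p t t.isLt.le)

/-- Compatibility with a nondeterministic environment strategy. -/
def CompatE (τ : ∀ i : ℕ, Path S A i → A → Set S) {i : ℕ} (p : Path S A i) : Prop :=
  ∀ t : Fin i, p.1 t.succ ∈ τ t (Path.take p t t.isLt.le) (p.2 t)

/-- `FPaths^H_M(s₀, A)`: length-`H` paths of `M` from `s₀` satisfying the advice. -/
def FPathsAdv (M : MDP S A) (H : ℕ) (s₀ : S) (Adv : Advice S A) : Set (Path S A H) :=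
  {p | M.ValidPath p ∧ Path.first p = s₀ ∧ Adv H p}

/-- `FPaths^H_M(s₀, σ)` for a nondeterministic strategy. -/
def FPathsN (M : MDP S A) (H : ℕ) (s₀ : S) (σ : NStrategy S A) : Set (Path S A H) :=
  {p | M.ValidPath p ∧ Path.first p = s₀ ∧ CompatN σ p}

/-- `FPaths^H_M(s₀, τ)` for a nondeterministic environment strategy. -/
def FPathsE (M : MDP S A) (H : ℕ) (s₀ : S) (τ : ∀ i : ℕ, Path S A i → A → Set S) :
    Set (Path S A H) :=
  {p | M.ValidPath p ∧ Path.first p = s₀ ∧ CompatE τ p}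

/-- `σ` witnesses that `Adv` is strongly enforceable from `s₀` with horizon `H`. -/
def Enforces (M : MDP S A) (Adv : Advice S A) (s₀ : S) (H : ℕ) (σ : NStrategy S A) : Prop :=
  FPathsN M H s₀ σ = FPathsAdv M H s₀ Adv ∧
  ∀ (i : ℕ) (p : Path S A i), i < H → M.ValidPath p → Path.first p = s₀ →
    CompatN σ p → (σ i p).Nonempty

def StronglyEnforceable (M : MDP S A) (Adv : Advice S A) (s₀ : S) (H : ℕ) : Prop :=
  ∃ σ : NStrategy S A, Enforces M Adv s₀ H σ

/-- The pruned unfolding `T(M, s₀, H, A)`: transitions not compatible with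
`σ_A^H` or `τ_A^H` are removed. -/
def prunedUnfold (M : MDP S A) (Adv : Advice S A) (H : ℕ) : MDP (UState S A H) A where
  P := fun q a q' =>
    if (q.1 : ℕ) < H then
      if a ∈ advStrat M Adv H (q.1 : ℕ) q.2 ∧
          Path.lastState q'.2 ∈ envStrat M Adv H (q.1 : ℕ) q.2 a then
        (M.unfold H).P q a q'
      else 0
    else (M.unfold H).P q a q'
  R := (M.unfold H).R
  RT := (M.unfold H).RT

/-- The optimality assumption: every horizon-`H` optimal deterministic strategy is
contained in `σ_A^H`. -/
def OptAssumption [Fintype S] [Fintype A] (M : MDP S A) (Adv : Advice S A) (H : ℕ) : Prop :=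
  ∀ (s : S) (σ : Strategy S A), IsStrategy σ → Deterministic σ →
    ValStrat M σ H s = M.Val H s →
    ∀ (i : ℕ) (p : Path S A i) (a : A), 0 < σ i p a → a ∈ advStrat M Adv H i p

/-- Actions achievable as the first action of some (deterministic) strategy attaining
the optimal expected total reward of horizon `H` at `s`. -/
def optFirst {T : Type} [Fintype T] [Fintype A] (N : MDP T A) (H : ℕ) (s : T) : Set A :=
  {a | ∃ σ : Strategy T A, IsStrategy σ ∧ Deterministic σ ∧
    ValStrat N σ H s = N.Val H s ∧ 0 < σ 0 (constPath s) a}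

/-- All total rewards of paths of length at most `H` lie in `[0,1]`. -/
def BoundedRewards (M : MDP S A) (H : ℕ) : Prop :=
  ∀ (i : ℕ) (p : Path S A i), i ≤ H → pathReward M p ∈ Set.Icc (0 : ℝ) 1

/-- `WinsAux M T k i h p` says: from the node `p` (of depth `i = H - k`), the
alternation `∃a ∀s ∃a ∀s … ∀s_last` can force reaching a length-`H` path in `T`,
states being quantified over the support of the current transition. -/
def WinsAux (M : MDP S A) {H : ℕ} (T : Path S A H → Prop) :
    (k : ℕ) → (i : ℕ) → i + k = H → Path S A i → Prop
  | 0, i, h, p => T ((show i = H by omega) ▸ p)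
  | k + 1, i, h, p =>
      ∃ a : A, ∀ s : S, 0 < M.P (Path.lastState p) a s →
        WinsAux M T k (i + 1) (by omega) (Path.snoc p a s)

/-- `Adv'` is the strongly enforceable advice extracted from `Adv` (greatest
strongly enforceable advice below `Adv`, from `s₀` with horizon `H`). -/
def ExtractedFrom (M : MDP S A) (Adv Adv' : Advice S A) (s₀ : S) (H : ℕ) : Prop :=
  StronglyEnforceable M Adv' s₀ H ∧
  FPathsAdv M H s₀ Adv' ⊆ FPathsAdv M H s₀ Adv ∧
  ∀ Adv'' : Advice S A, StronglyEnforceable M Adv'' s₀ H →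
    FPathsAdv M H s₀ Adv'' ⊆ FPathsAdv M H s₀ Adv →
    FPathsAdv M H s₀ Adv'' ⊆ FPathsAdv M H s₀ Adv'

/-- Player 1 can enforce, from node `p` of depth `i`, that every continuation
following some deterministic action-selection `f` (against arbitrary stochastic
successors in the support) reaches the target set `T` of leaves. -/
def CanEnforce (M : MDP S A) {H : ℕ} (T : Set (Path S A H)) (i : ℕ) (hi : i ≤ H)
    (p : Path S A i) : Prop :=
  ∃ f : ∀ j : ℕ, Path S A j → A,
    ∀ q : Path S A H, Path.take q i hi = p →
      (∀ t : Fin H, i ≤ (t : ℕ) → q.2 t = f t (Path.take q t t.isLt.le)) →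
      (∀ t : Fin H, i ≤ (t : ℕ) → 0 < M.P (q.1 t.castSucc) (q.2 t) (q.1 t.succ)) →
      q ∈ T

/-- The advice whose satisfied length-`H` paths are exactly the paths to `T`
remaining within winning nodes. -/
def winAdvice (M : MDP S A) {H : ℕ} (T : Set (Path S A H)) : Advice S A :=
  fun j q => ∀ h : j = H, (h ▸ q) ∈ T ∧
    ∀ (t : ℕ) (ht : t ≤ H), CanEnforce M T t ht (Path.take (h ▸ q) t ht)

/-- The uniform strategy. -/
def uniformStrategy (S A : Type) [Fintype A] : Strategy S A :=
  fun _ _ _ => 1 / (Fintype.card A : ℝ)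

end PaperMCTS

end
noncomputable section
namespace PaperMCTS

open Classical

variable {S A : Type}

/-! ### Path lemmas -/

theorem Path.take_take {i j k : ℕ} (p : Path S A i) (hj : j ≤ i) (hk : k ≤ j) :
    Path.take (Path.take p j hj) k hk = Path.take p k (hk.trans hj) := rfl

theorem Path.take_self {i : ℕ} (p : Path S A i) : Path.take p i le_rfl = p := rfl

theorem Path.take_zero {i : ℕ} (p : Path S A i) :
    Path.take p 0 (Nat.zero_le i) = constPath (p.1 0) := by
  refine Prod.ext ?_ ?_
  · funext t
    have : t = 0 := Fin.ext (by omega)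
    subst this; rfl
  · funext t; exact t.elim0

theorem Path.take_snoc {i j : ℕ} (p : Path S A i) (a : A) (s : S) (h : j ≤ i) :
    Path.take (Path.snoc p a s) j (by omega) = Path.take p j h := by
  refine Prod.ext ?_ ?_
  · funext t
    have ht : (t : ℕ) ≤ i := by have := t.isLt; omega
    simp only [Path.take, Path.snoc, ht, dif_pos]
  · funext t
    have ht : (t : ℕ) < i := by have := t.isLt; omega
    simp only [Path.take, Path.snoc, ht, dif_pos]

theorem Path.take_snoc_self {i : ℕ} (p : Path S A i) (a : A) (s : S) :
    Path.take (Path.snoc p a s) i (by omega) = p := by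
  rw [Path.take_snoc p a s le_rfl, Path.take_self]

theorem Path.snoc_take_succ {H : ℕ} (q : Path S A H) (t : ℕ) (ht : t < H) :
    Path.take q (t + 1) ht = Path.snoc (Path.take q t ht.le) (q.2 ⟨t, ht⟩)
      (q.1 ⟨t + 1, by omega⟩) := by
  refine Prod.ext ?_ ?_
  · funext u
    by_cases hu : (u : ℕ) ≤ t
    · simp only [Path.snoc, Path.take, hu, dif_pos]
    · have : (u : ℕ) = t + 1 := by have := u.isLt; omega
      simp only [Path.snoc, Path.take, hu, dif_neg, not_false_iff]
      exact congrArg q.1 (Fin.ext this)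
  · funext u
    by_cases hu : (u : ℕ) < t
    · simp only [Path.snoc, Path.take, hu, dif_pos]
    · have : (u : ℕ) = t := by have := u.isLt; omega
      simp only [Path.snoc, Path.take, hu, dif_neg, not_false_iff]
      exact congrArg q.2 (Fin.ext this)

theorem Path.lastState_take {i j : ℕ} (p : Path S A i) (h : j ≤ i) :
    Path.lastState (Path.take p j h) = p.1 ⟨j, by omega⟩ := rfl

theorem Path.lastState_snoc {i : ℕ} (p : Path S A i) (a : A) (s : S) :
    Path.lastState (Path.snoc p a s) = s := by
  have hc : ¬ ((Fin.last (i + 1)) : ℕ) ≤ i := by simp [Fin.val_last]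
  simp [Path.lastState, Path.snoc, hc]

theorem Path.first_snoc {i : ℕ} (p : Path S A i) (a : A) (s : S) :
    Path.first (Path.snoc p a s) = Path.first p := by
  simp only [Path.first, Path.snoc]
  rw [dif_pos (by simp)]
  exact congrArg p.1 (Fin.ext (by simp))

theorem Path.first_take {i j : ℕ} (p : Path S A i) (h : j ≤ i) :
    Path.first (Path.take p j h) = Path.first p := rfl

theorem Path.first_constPath (s : S) : Path.first (constPath s : Path S A 0) = s := rfl

theorem Path.constPath_inj {s s' : S} (h : (constPath s : Path S A 0) = constPath s') :
    s = s' := congrFun (congrArg Prod.fst h) 0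

theorem MDP.validPath_take (M : MDP S A) {i j : ℕ} {p : Path S A i} (hp : M.ValidPath p)
    (h : j ≤ i) : M.ValidPath (Path.take p j h) := by
  intro t
  have := hp ⟨t, by have := t.isLt; omega⟩
  simpa [Path.take, Fin.castSucc, Fin.succ, Fin.castAdd, Fin.castLE] using this

theorem MDP.validPath_snoc (M : MDP S A) {i : ℕ} {p : Path S A i} (hp : M.ValidPath p)
    {a : A} {s : S} (h : 0 < M.P (Path.lastState p) a s) :
    M.ValidPath (Path.snoc p a s) := by
  intro t
  by_cases ht : (t : ℕ) < i
  · have := hp ⟨t, ht⟩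
    have h1 : (Path.snoc p a s).1 t.castSucc = p.1 ⟨t, by omega⟩ := by
      simp only [Path.snoc, Fin.castSucc, Fin.castAdd, Fin.castLE]
      rw [dif_pos (by omega)]
    have h2 : (Path.snoc p a s).1 t.succ = p.1 ⟨(t : ℕ) + 1, by omega⟩ := by
      simp only [Path.snoc, Fin.succ]
      rw [dif_pos (by omega)]
    have h3 : (Path.snoc p a s).2 t = p.2 ⟨t, ht⟩ := by
      simp only [Path.snoc]
      rw [dif_pos ht]
    rw [h1, h2, h3]
    exact this
  · have hti : (t : ℕ) = i := by have := t.isLt; omega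
    have h1 : (Path.snoc p a s).1 t.castSucc = Path.lastState p := by
      simp only [Path.snoc, Fin.castSucc, Fin.castAdd, Fin.castLE]
      rw [dif_pos (by omega)]
      exact congrArg p.1 (Fin.ext (by simp [Fin.val_last, hti]))
    have h2 : (Path.snoc p a s).1 t.succ = s := by
      simp only [Path.snoc, Fin.succ]
      rw [dif_neg (by omega)]
    have h3 : (Path.snoc p a s).2 t = a := by
      simp only [Path.snoc]
      rw [dif_neg ht]
    rw [h1, h2, h3]
    exact h

/-! ### Strategy basics -/

/-- Dirac weights at an action. -/
def diracA [DecidableEq A] (a : A) : A → ℝ := fun b => if b = a then 1 else 0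

theorem diracA_nonneg [DecidableEq A] (a b : A) : 0 ≤ diracA a b := by
  unfold diracA; split <;> norm_num

theorem diracA_sum [Fintype A] [DecidableEq A] (a : A) : ∑ b, diracA a b = 1 := by
  simp [diracA]

theorem isStrategy_uniform [Fintype A] [Nonempty A] : IsStrategy (uniformStrategy S A) := by
  constructor
  · intro i p a
    unfold uniformStrategy
    positivity
  · intro i p
    unfold uniformStrategy
    rw [Finset.sum_const, Finset.card_univ, nsmul_eq_mul]
    have : (Fintype.card A : ℝ) ≠ 0 := by
      have := Fintype.card_pos (α := A)
      positivity
    field_simp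

theorem strategy_le_one [Fintype A] {σ : Strategy S A} (hσ : IsStrategy σ) (i : ℕ)
    (p : Path S A i) (a : A) : σ i p a ≤ 1 := by
  have := hσ.2 i p
  calc σ i p a ≤ ∑ b, σ i p b :=
        Finset.single_le_sum (fun b _ => hσ.1 i p b) (Finset.mem_univ a)
    _ = 1 := this

theorem MDP.P_le_one [Fintype S] {M : MDP S A} (hM : M.IsProper) (s : S) (a : A) (s' : S) :
    M.P s a s' ≤ 1 := by
  have := hM.2 s a
  calc M.P s a s' ≤ ∑ u, M.P s a u :=
        Finset.single_le_sum (fun u _ => hM.1 s a u) (Finset.mem_univ s')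
    _ = 1 := this

theorem pathProb_nonneg {T : Type} (N : MDP T A) {σ : Strategy T A}
    (hσ : ∀ i p a, 0 ≤ σ i p a) (hP : ∀ s a s', 0 ≤ N.P s a s') {H : ℕ} (p : Path T A H) :
    0 ≤ pathProb N σ p :=
  Finset.prod_nonneg fun t _ => mul_nonneg (hσ _ _ _) (hP _ _ _)

theorem pathProb_le_one {T : Type} [Fintype A] (N : MDP T A) {σ : Strategy T A}
    (hσ : IsStrategy σ) (hP0 : ∀ s a s', 0 ≤ N.P s a s') (hP1 : ∀ s a s', N.P s a s' ≤ 1)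
    {H : ℕ} (p : Path T A H) : pathProb N σ p ≤ 1 := by
  apply Finset.prod_le_one
  · intro t _
    exact mul_nonneg (hσ.1 _ _ _) (hP0 _ _ _)
  · intro t _
    exact mul_le_one₀ (strategy_le_one hσ _ _ _) (hP0 _ _ _) (hP1 _ _ _)

theorem ValStrat_le_gen {T : Type} [Fintype T] [Fintype A] (N : MDP T A)
    (hP0 : ∀ s a s', 0 ≤ N.P s a s') (hP1 : ∀ s a s', N.P s a s' ≤ 1) {H : ℕ} {B : ℝ}
    (hB : 0 ≤ B) (hRw : ∀ p : Path T A H, pathReward N p ≤ B) {σ : Strategy T A}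
    (hσ : IsStrategy σ) (s : T) :
    ValStrat N σ H s ≤ (Fintype.card (Path T A H) : ℝ) * B := by
  unfold ValStrat
  calc (∑ p : Path T A H, if Path.first p = s then pathProb N σ p * pathReward N p else 0)
      ≤ ∑ _p : Path T A H, B := by
        apply Finset.sum_le_sum
        intro p _
        split
        · calc pathProb N σ p * pathReward N p
              ≤ pathProb N σ p * B := by
                apply mul_le_mul_of_nonneg_left (hRw p) (pathProb_nonneg N hσ.1 hP0 p)
            _ ≤ 1 * B := by
                apply mul_le_mul_of_nonneg_right (pathProb_le_one N hσ hP0 hP1 p) hB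
            _ = B := one_mul B
        · exact hB
    _ = (Fintype.card (Path T A H) : ℝ) * B := by
        rw [Finset.sum_const, Finset.card_univ, nsmul_eq_mul]

theorem bddAbove_valStrat {T : Type} [Fintype T] [Fintype A] (N : MDP T A)
    (hP0 : ∀ s a s', 0 ≤ N.P s a s') (hP1 : ∀ s a s', N.P s a s' ≤ 1) {H : ℕ} {B : ℝ}
    (hB : 0 ≤ B) (hRw : ∀ p : Path T A H, pathReward N p ≤ B) (s : T) :
    BddAbove (Set.range fun σ : {σ : Strategy T A // IsStrategy σ} => ValStrat N σ.1 H s) := by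
  refine ⟨(Fintype.card (Path T A H) : ℝ) * B, ?_⟩
  rintro _ ⟨σ, rfl⟩
  exact ValStrat_le_gen N hP0 hP1 hB hRw σ.2 s

theorem ValStrat_le_val {T : Type} [Fintype T] [Fintype A] (N : MDP T A)
    (hP0 : ∀ s a s', 0 ≤ N.P s a s') (hP1 : ∀ s a s', N.P s a s' ≤ 1) {H : ℕ} {B : ℝ}
    (hB : 0 ≤ B) (hRw : ∀ p : Path T A H, pathReward N p ≤ B) {σ : Strategy T A}
    (hσ : IsStrategy σ) (s : T) : ValStrat N σ H s ≤ N.Val H s :=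
  le_ciSup (bddAbove_valStrat N hP0 hP1 hB hRw s) (⟨σ, hσ⟩ : {σ : Strategy T A // IsStrategy σ})

theorem val_le_of_forall {T : Type} [Fintype T] [Fintype A] [Nonempty A] (N : MDP T A)
    {H : ℕ} {c : ℝ} {s : T} (h : ∀ σ : Strategy T A, IsStrategy σ → ValStrat N σ H s ≤ c) :
    N.Val H s ≤ c := by
  have : Nonempty {σ : Strategy T A // IsStrategy σ} := ⟨⟨uniformStrategy T A, isStrategy_uniform⟩⟩
  exact ciSup_le fun σ => h σ.1 σ.2

theorem ValStrat_congr [Fintype S] [Fintype A] (M : MDP S A) {σ σ' : Strategy S A} (H : ℕ)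
    (s : S) (h : ∀ i : ℕ, i < H → ∀ p : Path S A i, σ i p = σ' i p) :
    ValStrat M σ H s = ValStrat M σ' H s := by
  unfold ValStrat
  apply Finset.sum_congr rfl
  intro p _
  have : pathProb M σ p = pathProb M σ' p := by
    unfold pathProb
    apply Finset.prod_congr rfl
    intro t _
    rw [h (t : ℕ) t.isLt (Path.take p (t : ℕ) t.isLt.le)]
  rw [this]

/-! ### Deterministic improvement -/

/-- Update a strategy at a single point. -/
def updStrat (σ : Strategy S A) (x : Σ i : ℕ, Path S A i) (w : A → ℝ) : Strategy S A :=
  fun j q => if (⟨j, q⟩ : Σ i : ℕ, Path S A i) = x then w else σ j q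

theorem isStrategy_updStrat [Fintype A] {σ : Strategy S A} (hσ : IsStrategy σ)
    (x : Σ i : ℕ, Path S A i) {w : A → ℝ} (hw0 : ∀ a, 0 ≤ w a) (hw1 : ∑ a, w a = 1) :
    IsStrategy (updStrat σ x w) := by
  constructor
  · intro i p a
    unfold updStrat
    split
    · exact hw0 a
    · exact hσ.1 i p a
  · intro i p
    unfold updStrat
    split
    · exact hw1
    · exact hσ.2 i p

theorem updStrat_self (σ : Strategy S A) (x : Σ i : ℕ, Path S A i) :
    updStrat σ x (σ x.1 x.2) = σ := by
  funext j q
  unfold updStrat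
  split
  · rename_i h
    subst h
    rfl
  · rfl

theorem pathProb_upd [Fintype A] (M : MDP S A) (σ : Strategy S A) (x : Σ i : ℕ, Path S A i)
    {w : A → ℝ} (hw : ∑ a, w a = 1) {H : ℕ} (q : Path S A H) :
    pathProb M (updStrat σ x w) q = ∑ a, w a * pathProb M (updStrat σ x (diracA a)) q := by
  by_cases hx : ∃ t : Fin H, (⟨(t : ℕ), Path.take q (t : ℕ) t.isLt.le⟩ : Σ i : ℕ, Path S A i) = x
  · obtain ⟨t₀, ht₀⟩ := hx
    have key : ∀ v : A → ℝ, pathProb M (updStrat σ x v) q =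
        v (q.2 t₀) * ∏ t : Fin H,
          (if t = t₀ then 1 else σ (t : ℕ) (Path.take q (t : ℕ) t.isLt.le) (q.2 t)) *
            M.P (q.1 t.castSucc) (q.2 t) (q.1 t.succ) := by
      intro v
      unfold pathProb
      have hfac : ∀ t : Fin H,
          updStrat σ x v (t : ℕ) (Path.take q (t : ℕ) t.isLt.le) (q.2 t) *
            M.P (q.1 t.castSucc) (q.2 t) (q.1 t.succ) =
          (if t = t₀ then v (q.2 t₀) else 1) *
            ((if t = t₀ then 1 else σ (t : ℕ) (Path.take q (t : ℕ) t.isLt.le) (q.2 t)) *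
              M.P (q.1 t.castSucc) (q.2 t) (q.1 t.succ)) := by
        intro t
        by_cases ht : t = t₀
        · subst ht
          rw [if_pos rfl, if_pos rfl, updStrat, if_pos ht₀]
          ring
        · have hne : (⟨(t : ℕ), Path.take q (t : ℕ) t.isLt.le⟩ : Σ i : ℕ, Path S A i) ≠ x := by
            intro hcon
            apply ht
            apply Fin.ext
            have := congrArg Sigma.fst (hcon.trans ht₀.symm)
            simpa using this
          rw [if_neg ht, if_neg ht, updStrat, if_neg hne]
          ring
      rw [Finset.prod_congr rfl fun t _ => hfac t, Finset.prod_mul_distrib]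
      congr 1
      rw [Finset.prod_eq_single t₀]
      · rw [if_pos rfl]
      · intro t _ ht
        rw [if_neg ht]
      · intro h
        exact absurd (Finset.mem_univ t₀) h
    rw [key w]
    have : ∀ a : A, w a * pathProb M (updStrat σ x (diracA a)) q =
        (if q.2 t₀ = a then w a else 0) * ∏ t : Fin H,
          (if t = t₀ then 1 else σ (t : ℕ) (Path.take q (t : ℕ) t.isLt.le) (q.2 t)) *
            M.P (q.1 t.castSucc) (q.2 t) (q.1 t.succ) := by
      intro a
      rw [key (diracA a)]
      unfold diracA
      split <;> ring
    rw [Finset.sum_congr rfl fun a _ => this a, ← Finset.sum_mul]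
    congr 1
    rw [Finset.sum_ite_eq]
    simp
  · push_neg at hx
    have key : ∀ v : A → ℝ, pathProb M (updStrat σ x v) q = pathProb M σ q := by
      intro v
      unfold pathProb
      apply Finset.prod_congr rfl
      intro t _
      rw [updStrat, if_neg (hx t)]
    rw [key w]
    have : ∀ a : A, w a * pathProb M (updStrat σ x (diracA a)) q = w a * pathProb M σ q := by
      intro a
      rw [key (diracA a)]
    rw [Finset.sum_congr rfl fun a _ => this a, ← Finset.sum_mul, hw, one_mul]

theorem ValStrat_upd [Fintype S] [Fintype A] (M : MDP S A) (σ : Strategy S A)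
    (x : Σ i : ℕ, Path S A i) {w : A → ℝ} (hw : ∑ a, w a = 1) (H : ℕ) (s : S) :
    ValStrat M (updStrat σ x w) H s =
      ∑ a, w a * ValStrat M (updStrat σ x (diracA a)) H s := by
  unfold ValStrat
  have step : ∀ p : Path S A H,
      (if Path.first p = s then pathProb M (updStrat σ x w) p * pathReward M p else 0) =
      ∑ a, w a * (if Path.first p = s
        then pathProb M (updStrat σ x (diracA a)) p * pathReward M p else 0) := by
    intro p
    by_cases h : Path.first p = s
    · simp only [if_pos h]
      rw [pathProb_upd M σ x hw p, Finset.sum_mul]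
      apply Finset.sum_congr rfl
      intro a _
      ring
    · simp [h]
  rw [Finset.sum_congr rfl fun p _ => step p, Finset.sum_comm]
  apply Finset.sum_congr rfl
  intro a _
  rw [Finset.mul_sum]

theorem exists_upd_dirac_ge [Fintype S] [Fintype A] [Nonempty A] (M : MDP S A)
    {σ : Strategy S A} (hσ : IsStrategy σ) (x : Σ i : ℕ, Path S A i) (H : ℕ) (s : S) :
    ∃ a : A, IsStrategy (updStrat σ x (diracA a)) ∧
      ValStrat M σ H s ≤ ValStrat M (updStrat σ x (diracA a)) H s := by
  obtain ⟨a0, -, hmax⟩ := Finset.exists_max_image Finset.univ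
    (fun a => ValStrat M (updStrat σ x (diracA a)) H s) Finset.univ_nonempty
  refine ⟨a0, isStrategy_updStrat hσ x (diracA_nonneg a0) (diracA_sum a0), ?_⟩
  have h1 := ValStrat_upd M σ x (hσ.2 x.1 x.2) H s
  rw [updStrat_self σ x] at h1
  rw [h1]
  calc ∑ a, σ x.1 x.2 a * ValStrat M (updStrat σ x (diracA a)) H s
      ≤ ∑ a, σ x.1 x.2 a * ValStrat M (updStrat σ x (diracA a0)) H s := by
        apply Finset.sum_le_sum
        intro a _
        exact mul_le_mul_of_nonneg_left (hmax a (Finset.mem_univ a)) (hσ.1 x.1 x.2 a)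
    _ = ValStrat M (updStrat σ x (diracA a0)) H s := by
        rw [← Finset.sum_mul, hσ.2 x.1 x.2, one_mul]

theorem list_improve [Fintype S] [Fintype A] [Nonempty A] (M : MDP S A) (H : ℕ) (s : S) :
    ∀ (L : List (Σ i : ℕ, Path S A i)) (σ : Strategy S A), IsStrategy σ →
      ∃ σ' : Strategy S A, IsStrategy σ' ∧ ValStrat M σ H s ≤ ValStrat M σ' H s ∧
        (∀ x ∈ L, ∃ a : A, σ' x.1 x.2 = diracA a) ∧
        (∀ y : Σ i : ℕ, Path S A i, y ∉ L → σ' y.1 y.2 = σ y.1 y.2) := by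
  intro L
  induction L with
  | nil =>
    intro σ hσ
    exact ⟨σ, hσ, le_rfl, fun x hx => absurd hx List.not_mem_nil, fun y _ => rfl⟩
  | cons x L ih =>
    intro σ hσ
    obtain ⟨a0, ha0, hle0⟩ := exists_upd_dirac_ge M hσ x H s
    obtain ⟨σ', hσ', hle, hdir, huntouched⟩ := ih (updStrat σ x (diracA a0)) ha0
    refine ⟨σ', hσ', hle0.trans hle, ?_, ?_⟩
    · intro z hz
      rcases List.mem_cons.mp hz with hz | hz
      · subst hz
        by_cases hzL : z ∈ L
        · exact hdir z hzL
        · refine ⟨a0, ?_⟩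
          rw [huntouched z hzL]
          unfold updStrat
          rw [if_pos rfl]
      · exact hdir z hz
    · intro y hy
      have hyL : y ∉ L := fun h => hy (List.mem_cons_of_mem x h)
      have hyx : y ≠ x := fun h => hy (h ▸ (List.mem_cons_self : x ∈ x :: L))
      rw [huntouched y hyL]
      have hne : (⟨y.1, y.2⟩ : Σ i : ℕ, Path S A i) ≠ x := fun hcon => hyx hcon
      unfold updStrat
      rw [if_neg hne]

/-- The deterministic strategy induced by a family of choice functions on levels `< H`. -/
def stratOfD [Nonempty A] (H : ℕ) (f : ∀ i : Fin H, Path S A (i : ℕ) → A) : Strategy S A :=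
  fun i p => if h : i < H then diracA (f ⟨i, h⟩ p) else diracA (Classical.arbitrary A)

theorem isStrategy_stratOfD [Fintype A] [Nonempty A] (H : ℕ)
    (f : ∀ i : Fin H, Path S A (i : ℕ) → A) : IsStrategy (stratOfD H f) := by
  constructor
  · intro i p a
    unfold stratOfD
    split <;> exact diracA_nonneg _ _
  · intro i p
    unfold stratOfD
    split <;> exact diracA_sum _

theorem deterministic_diracA [DecidableEq A] {g : A → ℝ} (hg : ∃ a, g = diracA a) :
    ∃ a, ∀ b, (0 < g b ↔ b = a) := by
  obtain ⟨a, rfl⟩ := hg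
  refine ⟨a, fun b => ?_⟩
  unfold diracA
  split <;> rename_i hb
  · simpa using hb
  · constructor
    · intro h
      norm_num at h
    · intro h
      exact absurd h hb

theorem deterministic_stratOfD [Nonempty A] (H : ℕ)
    (f : ∀ i : Fin H, Path S A (i : ℕ) → A) : Deterministic (stratOfD H f) := by
  intro i p
  apply deterministic_diracA
  unfold stratOfD
  split
  · exact ⟨_, rfl⟩
  · exact ⟨_, rfl⟩

/-- Existence of an optimal deterministic strategy with horizon `H` at `s`. -/
theorem exists_det_opt [Fintype S] [Fintype A] [Nonempty A] (M : MDP S A) (hM : M.IsProper)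
    (H : ℕ) (hRew : BoundedRewards M H) (s : S) :
    ∃ σ : Strategy S A, IsStrategy σ ∧ Deterministic σ ∧ ValStrat M σ H s = M.Val H s := by
  classical
  have hne : Nonempty (∀ i : Fin H, Path S A (i : ℕ) → A) :=
    ⟨fun _ _ => Classical.arbitrary A⟩
  obtain ⟨f0, -, hf0⟩ := Finset.exists_max_image
    (Finset.univ : Finset (∀ i : Fin H, Path S A (i : ℕ) → A))
    (fun f => ValStrat M (stratOfD H f) H s) Finset.univ_nonempty
  have hP1 := fun s a s' => MDP.P_le_one hM s a s'
  have hRw : ∀ p : Path S A H, pathReward M p ≤ 1 := fun p => (hRew H p le_rfl).2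
  have hdom : ∀ σ : Strategy S A, IsStrategy σ →
      ValStrat M σ H s ≤ ValStrat M (stratOfD H f0) H s := by
    intro σ hσ
    set L : List (Σ i : ℕ, Path S A i) :=
      ((Finset.univ : Finset (Σ i : Fin H, Path S A (i : ℕ))).toList).map
        (fun x => ⟨(x.1 : ℕ), x.2⟩) with hL
    obtain ⟨σ', hσ', hle, hdir, -⟩ := list_improve M H s L σ hσ
    have hmem : ∀ (i : ℕ) (hi : i < H) (p : Path S A i),
        (⟨i, p⟩ : Σ i : ℕ, Path S A i) ∈ L := by
      intro i hi p
      rw [hL]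
      apply List.mem_map.mpr
      exact ⟨⟨⟨i, hi⟩, p⟩, Finset.mem_toList.mpr (Finset.mem_univ _), rfl⟩
    have hcongr : ValStrat M σ' H s =
        ValStrat M (stratOfD H (fun i p => Classical.choose
          (hdir ⟨(i : ℕ), p⟩ (hmem (i : ℕ) i.isLt p)))) H s := by
      apply ValStrat_congr
      intro i hi p
      have := Classical.choose_spec (hdir ⟨i, p⟩ (hmem i hi p))
      unfold stratOfD
      rw [dif_pos hi]
      exact this
    calc ValStrat M σ H s ≤ ValStrat M σ' H s := hle
      _ = _ := hcongr
      _ ≤ ValStrat M (stratOfD H f0) H s := hf0 _ (Finset.mem_univ _)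
  refine ⟨stratOfD H f0, isStrategy_stratOfD H f0, deterministic_stratOfD H f0,
    le_antisymm ?_ ?_⟩
  · exact ValStrat_le_val M hM.1 hP1 zero_le_one hRw (isStrategy_stratOfD H f0) s
  · exact val_le_of_forall M hdom

/-! ### Enforceability lemmas -/

theorem compatN_take {σE : NStrategy S A} {i j : ℕ} {q : Path S A i} (h : CompatN σE q)
    (hj : j ≤ i) : CompatN σE (Path.take q j hj) := by
  intro t
  exact h ⟨(t : ℕ), by have := t.isLt; omega⟩

theorem compatN_snoc {σE : NStrategy S A} {i : ℕ} {p : Path S A i} (h : CompatN σE p)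
    {a : A} {s : S} (ha : a ∈ σE i p) : CompatN σE (Path.snoc p a s) := by
  intro t
  by_cases ht : (t : ℕ) < i
  · have h2 : (Path.snoc p a s).2 t = p.2 ⟨(t : ℕ), ht⟩ := by
      simp only [Path.snoc]
      rw [dif_pos ht]
    have h3 : Path.take (Path.snoc p a s) (t : ℕ) t.isLt.le
        = Path.take p (t : ℕ) (by omega) := Path.take_snoc p a s (by omega)
    rw [h2, h3]
    exact h ⟨(t : ℕ), ht⟩
  · have hteq : t = Fin.last i := by
      apply Fin.ext
      rw [Fin.val_last]
      have := t.isLt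
      omega
    subst hteq
    have h2 : (Path.snoc p a s).2 (Fin.last i) = a := by
      simp only [Path.snoc]
      rw [dif_neg (by simp)]
    rw [h2]
    simp only [Fin.val_last]
    rw [Path.take_snoc_self]
    exact ha

theorem MDP.exists_pos_succ [Fintype S] {M : MDP S A} (hM : M.IsProper) (s : S) (a : A) :
    ∃ s', 0 < M.P s a s' := by
  by_contra hcon
  push_neg at hcon
  have : ∑ s', M.P s a s' = 0 := by
    apply Finset.sum_eq_zero
    intro s' _
    exact le_antisymm (hcon s') (hM.1 s a s')
  rw [hM.2 s a] at this
  norm_num at this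

theorem MDP.validPath_of_parts (M : MDP S A) {H i : ℕ} (hi : i ≤ H) (q : Path S A H)
    (h1 : M.ValidPath (Path.take q i hi))
    (h2 : ∀ t : Fin H, i ≤ (t : ℕ) → 0 < M.P (q.1 t.castSucc) (q.2 t) (q.1 t.succ)) :
    M.ValidPath q := by
  intro t
  by_cases ht : (t : ℕ) < i
  · exact h1 ⟨(t : ℕ), ht⟩
  · exact h2 t (by omega)

/-- Any valid path from `s₀` compatible with an enforcing strategy can be extended to a
full valid compatible path of length `H`. -/
theorem extend_compat [Fintype S] (M : MDP S A) (hM : M.IsProper) {Adv : Advice S A}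
    {s₀ : S} {H : ℕ} {σE : NStrategy S A} (hE : Enforces M Adv s₀ H σE) :
    ∀ (k j : ℕ) (hj : j + k = H) (p : Path S A j), M.ValidPath p → Path.first p = s₀ →
      CompatN σE p → ∃ Q : Path S A H, M.ValidPath Q ∧ Path.first Q = s₀ ∧
        CompatN σE Q ∧ Path.take Q j (by omega) = p := by
  intro k
  induction k with
  | zero =>
    intro j hj p hval hfirst hcompat
    have : j = H := by omega
    subst this
    exact ⟨p, hval, hfirst, hcompat, Path.take_self p⟩
  | succ k ih =>
    intro j hj p hval hfirst hcompat
    have hjH : j < H := by omega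
    obtain ⟨a, ha⟩ := hE.2 j p hjH hval hfirst hcompat
    obtain ⟨s, hs⟩ := MDP.exists_pos_succ hM (Path.lastState p) a
    obtain ⟨Q, hQ1, hQ2, hQ3, hQ4⟩ := ih (j + 1) (by omega) (Path.snoc p a s)
      (M.validPath_snoc hval hs) ((Path.first_snoc p a s).trans hfirst)
      (compatN_snoc hcompat ha)
    refine ⟨Q, hQ1, hQ2, hQ3, ?_⟩
    have : Path.take Q j (by omega) = Path.take (Path.snoc p a s) j (by omega) := by
      rw [← hQ4, Path.take_take]
    rw [this, Path.take_snoc_self]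

/-- Key lemma: along valid paths from `s₀`, actions allowed by `σ_A^H` lead (with any
positive-probability successor) to states allowed by `τ_A^H`. -/
theorem adv_env_compat [Fintype S] (M : MDP S A) (hM : M.IsProper) {Adv : Advice S A}
    {s₀ : S} {H : ℕ} {σE : NStrategy S A} (hE : Enforces M Adv s₀ H σE) {i : ℕ}
    (hi : i < H) {p : Path S A i} (hval : M.ValidPath p) (hfirst : Path.first p = s₀)
    {a : A} (ha : a ∈ advStrat M Adv H i p) {s : S}
    (hs : 0 < M.P (Path.lastState p) a s) : s ∈ envStrat M Adv H i p a := by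
  rw [advStrat] at ha
  rw [dif_pos hi] at ha
  obtain ⟨q', hAdv, htake, hact, hsuf⟩ := ha
  have hval' : M.ValidPath q' := by
    apply M.validPath_of_parts hi.le q' _ hsuf
    rw [htake]
    exact hval
  have hfirst' : Path.first q' = s₀ := by
    have : Path.first q' = Path.first (Path.take q' i hi.le) := (Path.first_take q' hi.le).symm
    rw [this, htake, hfirst]
  have hcompat' : CompatN σE q' := by
    have : q' ∈ FPathsN M H s₀ σE := by
      rw [hE.1]
      exact ⟨hval', hfirst', hAdv⟩
    exact this.2.2
  have hain : a ∈ σE i p := by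
    have hc := hcompat' ⟨i, hi⟩
    rw [hact] at hc
    rw [show Path.take q' ((⟨i, hi⟩ : Fin H) : ℕ) (Fin.isLt _).le = p from htake] at hc
    exact hc
  have hcompatp : CompatN σE p := by
    have hc := compatN_take hcompat' hi.le
    rw [htake] at hc
    exact hc
  have hp1val : M.ValidPath (Path.snoc p a s) := M.validPath_snoc hval hs
  have hp1first : Path.first (Path.snoc p a s) = s₀ := (Path.first_snoc p a s).trans hfirst
  have hp1compat : CompatN σE (Path.snoc p a s) := compatN_snoc hcompatp hain
  obtain ⟨Q, hQval, hQfirst, hQcompat, hQtake⟩ := extend_compat M hM hE (H - (i + 1)) (i + 1)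
    (by omega) _ hp1val hp1first hp1compat
  have hQAdv : Adv H Q := by
    have hc : Q ∈ FPathsAdv M H s₀ Adv := by
      rw [← hE.1]
      exact ⟨hQval, hQfirst, hQcompat⟩
    exact hc.2.2
  rw [envStrat, dif_pos hi]
  refine ⟨hs, Q, hQAdv, ?_, ?_, ?_, fun t _ => hQval t⟩
  · have hc : Path.take Q i (by omega) = Path.take (Path.snoc p a s) i (by omega) := by
      rw [← hQtake, Path.take_take]
    rw [hc, Path.take_snoc_self]
  · have h1 : Q.2 ⟨i, hi⟩ = (Path.take Q (i + 1) (by omega)).2 ⟨i, by omega⟩ := rfl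
    rw [h1, hQtake]
    simp only [Path.snoc]
    rw [dif_neg (by simp)]
  · have h1 : Q.1 ⟨i + 1, by omega⟩ = (Path.take Q (i + 1) (by omega)).1 ⟨i + 1, by omega⟩ := rfl
    rw [h1, hQtake]
    exact Path.lastState_snoc p a s

/-! ### Embedding paths into the unfolding -/

/-- Embed a path of `M` as a path of the unfolding (sequence of its prefixes). -/
def embedP {H i : ℕ} (hi : i ≤ H) (p : Path S A i) : Path (UState S A H) A i :=
  (fun t => ⟨⟨(t : ℕ), by have := t.isLt; omega⟩,
      Path.take p (t : ℕ) (by have := t.isLt; omega)⟩, p.2)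

/-- Project a path of the unfolding back to a path of `M`. -/
def projP {H i : ℕ} (Q : Path (UState S A H) A i) : Path S A i :=
  (fun t => Path.lastState (Q.1 t).2, Q.2)

theorem projP_embedP {H i : ℕ} (hi : i ≤ H) (p : Path S A i) : projP (embedP hi p) = p := by
  refine Prod.ext ?_ rfl
  funext t
  show Path.lastState (Path.take p (t : ℕ) (by have := t.isLt; omega)) = p.1 t
  rw [Path.lastState_take]

theorem embedP_injective {H i : ℕ} (hi : i ≤ H) :
    Function.Injective (embedP (S := S) (A := A) hi) := by
  intro p p' h
  have := congrArg projP h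
  rwa [projP_embedP, projP_embedP] at this

theorem take_embedP {H i j : ℕ} (hi : i ≤ H) (p : Path S A i) (hj : j ≤ i) :
    Path.take (embedP hi p) j hj = embedP (hj.trans hi) (Path.take p j hj) := rfl

theorem mk_eq_iff {H j : ℕ} (h1 h2 : j < H + 1) (p p' : Path S A j) :
    ((⟨⟨j, h1⟩, p⟩ : UState S A H) = ⟨⟨j, h2⟩, p'⟩) ↔ p = p' := by
  constructor
  · intro h
    rw [Sigma.mk.inj_iff] at h
    exact eq_of_heq h.2
  · intro h
    subst h
    rfl

theorem embedP_constPath {H : ℕ} (s₀ : S) :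
    embedP (Nat.zero_le H) (constPath s₀ : Path S A 0) = constPath (UState.root H s₀) := by
  refine Prod.ext ?_ ?_
  · funext t
    have ht : t = 0 := Fin.ext (by omega)
    subst ht
    show (⟨⟨0, by omega⟩, Path.take (constPath s₀) 0 (by omega)⟩ :
      UState S A H) = UState.root H s₀
    rw [UState.root, mk_eq_iff, Path.take_zero]
    rfl
  · funext t
    exact t.elim0

theorem first_embedP_iff {H : ℕ} (q : Path S A H) (s₀ : S) :
    Path.first (embedP le_rfl q) = UState.root H s₀ ↔ Path.first q = s₀ := by
  show (⟨⟨0, by omega⟩, Path.take q 0 (by omega)⟩ : UState S A H) = UState.root H s₀ ↔ _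
  rw [UState.root, mk_eq_iff, Path.take_zero]
  constructor
  · intro h
    exact Path.constPath_inj h
  · intro h
    rw [show q.1 0 = s₀ from h]

/-! ### Pulling back and pushing forward strategies -/

def pullStrat [Nonempty A] {H : ℕ} (σT : Strategy (UState S A H) A) : Strategy S A :=
  fun i p => if h : i ≤ H then σT i (embedP h p) else diracA (Classical.arbitrary A)

def pushStrat {H : ℕ} (σ : Strategy S A) : Strategy (UState S A H) A :=
  fun i Q => σ i (projP Q)

theorem isStrategy_pullStrat [Fintype A] [Nonempty A] {H : ℕ}
    {σT : Strategy (UState S A H) A} (h : IsStrategy σT) : IsStrategy (pullStrat σT) := by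
  constructor
  · intro i p a
    unfold pullStrat
    split
    · exact h.1 _ _ _
    · exact diracA_nonneg _ _
  · intro i p
    unfold pullStrat
    split
    · exact h.2 _ _
    · exact diracA_sum _

theorem deterministic_pullStrat [Nonempty A] {H : ℕ} {σT : Strategy (UState S A H) A}
    (h : Deterministic σT) : Deterministic (pullStrat σT) := by
  intro i p
  unfold pullStrat
  split
  · exact h i _
  · exact deterministic_diracA ⟨_, rfl⟩

theorem isStrategy_pushStrat [Fintype A] {H : ℕ} {σ : Strategy S A} (h : IsStrategy σ) :
    IsStrategy (pushStrat (H := H) σ) :=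
  ⟨fun _ _ _ => h.1 _ _ _, fun _ _ => h.2 _ _⟩

/-! ### Bounds for the pruned unfolding -/

theorem prunedP_nonneg [Fintype S] {M : MDP S A} (hM : M.IsProper) (Adv : Advice S A)
    (H : ℕ) : ∀ Q a Q', 0 ≤ (prunedUnfold M Adv H).P Q a Q' := by
  intro Q a Q'
  unfold prunedUnfold MDP.unfold
  dsimp only
  split_ifs <;> first | exact hM.1 _ _ _ | norm_num

theorem prunedP_le_one [Fintype S] {M : MDP S A} (hM : M.IsProper) (Adv : Advice S A)
    (H : ℕ) : ∀ Q a Q', (prunedUnfold M Adv H).P Q a Q' ≤ 1 := by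
  intro Q a Q'
  unfold prunedUnfold MDP.unfold
  dsimp only
  split_ifs <;> first | exact MDP.P_le_one hM _ _ _ | norm_num

theorem MDP.RT_mem {M : MDP S A} {H : ℕ} (hRew : BoundedRewards M H) (s : S) :
    M.RT s ∈ Set.Icc (0 : ℝ) 1 := by
  have h := hRew 0 (constPath s) (Nat.zero_le H)
  simpa [pathReward, Path.lastState, constPath] using h

theorem MDP.R_le_one {M : MDP S A} {H : ℕ} (hRew : BoundedRewards M H) (h1 : 1 ≤ H)
    (s : S) (a : A) : M.R s a ≤ 1 := by
  have h := hRew 1 ((fun _ => s, fun _ => a) : Path S A 1) h1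
  have h2 : pathReward M ((fun _ => s, fun _ => a) : Path S A 1) = M.R s a + M.RT s := by
    simp [pathReward, Path.lastState, Fin.sum_univ_one]
  rw [h2] at h
  have h3 := (MDP.RT_mem hRew s).1
  have h4 := h.2
  linarith

theorem prunedReward_le [Fintype S] (M : MDP S A) (Adv : Advice S A) {H : ℕ}
    (hRew : BoundedRewards M H) (Q : Path (UState S A H) A H) :
    pathReward (prunedUnfold M Adv H) Q ≤ (H : ℝ) + 1 := by
  unfold pathReward
  have hR : ∀ t : Fin H, (prunedUnfold M Adv H).R (Q.1 t.castSucc) (Q.2 t) ≤ 1 := by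
    intro t
    show (if ((Q.1 t.castSucc).1 : ℕ) < H then M.R (Path.lastState (Q.1 t.castSucc).2) (Q.2 t)
      else 0) ≤ 1
    split_ifs with h
    · exact MDP.R_le_one hRew (by omega) _ _
    · norm_num
  have hRT : (prunedUnfold M Adv H).RT (Path.lastState Q) ≤ 1 :=
    (MDP.RT_mem hRew _).2
  have hsum : ∑ t : Fin H, (prunedUnfold M Adv H).R (Q.1 t.castSucc) (Q.2 t) ≤ (H : ℝ) := by
    calc ∑ t : Fin H, (prunedUnfold M Adv H).R (Q.1 t.castSucc) (Q.2 t)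
        ≤ ∑ _t : Fin H, (1 : ℝ) := Finset.sum_le_sum fun t _ => hR t
      _ = (H : ℝ) := by simp
  linarith

/-! ### The pruned unfolding along embedded paths -/

theorem embedP_castSucc {H : ℕ} (q : Path S A H) (t : Fin H) :
    (embedP le_rfl q).1 t.castSucc
      = ⟨⟨(t : ℕ), by omega⟩, Path.take q (t : ℕ) t.isLt.le⟩ := rfl

theorem embedP_succ {H : ℕ} (q : Path S A H) (t : Fin H) :
    (embedP le_rfl q).1 t.succ
      = ⟨⟨(t : ℕ) + 1, by omega⟩, Path.take q ((t : ℕ) + 1) t.isLt⟩ := rfl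

theorem embedP_snd {H : ℕ} (q : Path S A H) (t : Fin H) :
    (embedP le_rfl q).2 t = q.2 t := rfl

theorem pathReward_embedP [Fintype S] (M : MDP S A) (Adv : Advice S A) {H : ℕ}
    (q : Path S A H) :
    pathReward (prunedUnfold M Adv H) (embedP le_rfl q) = pathReward M q := by
  unfold pathReward prunedUnfold MDP.unfold
  dsimp only
  congr 1
  · apply Finset.sum_congr rfl
    intro t _
    rw [embedP_castSucc, embedP_snd]
    dsimp only
    rw [if_pos t.isLt, Path.lastState_take]
    rfl

theorem prunedP_step [Fintype S] (M : MDP S A) (Adv : Advice S A) {H : ℕ}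
    (q : Path S A H) (t : Fin H) :
    (prunedUnfold M Adv H).P ((embedP le_rfl q).1 t.castSucc) (q.2 t)
      ((embedP le_rfl q).1 t.succ) =
    (if q.2 t ∈ advStrat M Adv H (t : ℕ) (Path.take q (t : ℕ) t.isLt.le) ∧
        q.1 t.succ ∈ envStrat M Adv H (t : ℕ) (Path.take q (t : ℕ) t.isLt.le) (q.2 t)
      then (1 : ℝ) else 0) * M.P (q.1 t.castSucc) (q.2 t) (q.1 t.succ) := by
  rw [embedP_castSucc, embedP_succ]
  have hstruct : (⟨⟨(t : ℕ) + 1, by omega⟩, Path.take q ((t : ℕ) + 1) t.isLt⟩ : UState S A H)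
      = ⟨⟨(t : ℕ) + 1, by omega⟩, Path.snoc (Path.take q (t : ℕ) t.isLt.le) (q.2 t)
          (Path.lastState (Path.take q ((t : ℕ) + 1) t.isLt))⟩ := by
    rw [mk_eq_iff, Path.lastState_take]
    exact Path.snoc_take_succ q (t : ℕ) t.isLt
  unfold prunedUnfold MDP.unfold
  dsimp only
  rw [if_pos t.isLt, dif_pos t.isLt, if_pos hstruct, Path.lastState_take, Path.lastState_take]
  have hc1 : q.1 ⟨(t : ℕ), by omega⟩ = q.1 t.castSucc := rfl
  have hc2 : q.1 ⟨(t : ℕ) + 1, by omega⟩ = q.1 t.succ := rfl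
  rw [hc1, hc2]
  split_ifs with h
  · rw [one_mul]
  · rw [zero_mul]

theorem pathProb_embedP [Fintype S] [Fintype A] [Nonempty A] (M : MDP S A) (Adv : Advice S A)
    {H : ℕ} (σT : Strategy (UState S A H) A) (q : Path S A H) :
    pathProb (prunedUnfold M Adv H) σT (embedP le_rfl q) =
      (∏ t : Fin H, if q.2 t ∈ advStrat M Adv H (t : ℕ) (Path.take q (t : ℕ) t.isLt.le) ∧
          q.1 t.succ ∈ envStrat M Adv H (t : ℕ) (Path.take q (t : ℕ) t.isLt.le) (q.2 t)
        then (1 : ℝ) else 0) * pathProb M (pullStrat σT) q := by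
  unfold pathProb
  rw [← Finset.prod_mul_distrib]
  apply Finset.prod_congr rfl
  intro t _
  have hσ : σT (t : ℕ) (Path.take (embedP le_rfl q) (t : ℕ) t.isLt.le)
      ((embedP le_rfl q).2 t) =
      pullStrat σT (t : ℕ) (Path.take q (t : ℕ) t.isLt.le) (q.2 t) := by
    rw [take_embedP]
    unfold pullStrat
    rw [dif_pos (show (t : ℕ) ≤ H from t.isLt.le)]
    rfl
  rw [hσ, embedP_snd, prunedP_step M Adv q t]
  ring

/-! ### Paths of the pruned unfolding with nonzero probability are embedded paths -/

theorem embed_of_prob_ne_zero [Fintype S] [Fintype A] (M : MDP S A) (Adv : Advice S A)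
    {H : ℕ} (s₀ : S) (σT : Strategy (UState S A H) A) (Q : Path (UState S A H) A H)
    (hfirst : Path.first Q = UState.root H s₀)
    (hprob : pathProb (prunedUnfold M Adv H) σT Q ≠ 0) : Q = embedP le_rfl (projP Q) := by
  have hfac : ∀ t : Fin H,
      (prunedUnfold M Adv H).P (Q.1 t.castSucc) (Q.2 t) (Q.1 t.succ) ≠ 0 := by
    intro t
    have h1 := Finset.prod_ne_zero_iff.mp hprob t (Finset.mem_univ t)
    intro h0
    rw [h0, mul_zero] at h1
    exact h1 rfl
  have key : ∀ (n : ℕ) (hn : n ≤ H),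
      Q.1 ⟨n, by omega⟩ = ⟨⟨n, by omega⟩, Path.take (projP Q) n hn⟩ := by
    intro n
    induction n with
    | zero =>
      intro hn
      have h0 : Q.1 ⟨0, by omega⟩ = UState.root H s₀ := hfirst
      rw [h0, UState.root, mk_eq_iff, Path.take_zero]
      have h1 : (projP Q).1 0 = s₀ := by
        show Path.lastState (Q.1 0).2 = s₀
        rw [show Q.1 0 = UState.root H s₀ from hfirst]
        rfl
      rw [h1]
    | succ n ih =>
      intro hn
      have hnH : n < H := by omega
      have hfn := hfac ⟨n, hnH⟩
      have hsrc : Q.1 (⟨n, hnH⟩ : Fin H).castSucc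
          = ⟨⟨n, by omega⟩, Path.take (projP Q) n (by omega)⟩ := ih (by omega)
      rw [hsrc] at hfn
      unfold prunedUnfold MDP.unfold at hfn
      dsimp only at hfn
      rw [if_pos hnH, dif_pos hnH] at hfn
      -- peel the pruning condition
      by_cases hc : Q.2 ⟨n, hnH⟩ ∈ advStrat M Adv H n (Path.take (projP Q) n (by omega)) ∧
          Path.lastState (Q.1 (⟨n, hnH⟩ : Fin H).succ).2 ∈
            envStrat M Adv H n (Path.take (projP Q) n (by omega)) (Q.2 ⟨n, hnH⟩)
      swap
      · rw [if_neg hc] at hfn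
        exact absurd rfl hfn
      rw [if_pos hc] at hfn
      by_cases hstruct : Q.1 (⟨n, hnH⟩ : Fin H).succ
          = ⟨⟨n + 1, by omega⟩, Path.snoc (Path.take (projP Q) n (by omega)) (Q.2 ⟨n, hnH⟩)
              (Path.lastState (Q.1 (⟨n, hnH⟩ : Fin H).succ).2)⟩
      swap
      · rw [if_neg hstruct] at hfn
        exact absurd rfl hfn
      have hQsucc : Q.1 ⟨n + 1, by omega⟩ = Q.1 (⟨n, hnH⟩ : Fin H).succ := rfl
      rw [hQsucc, hstruct, mk_eq_iff]
      have hsnoc := Path.snoc_take_succ (projP Q) n hnH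
      rw [hsnoc]
      rfl
  refine Prod.ext ?_ rfl
  funext t
  have h1 : Q.1 t = Q.1 ⟨(t : ℕ), by omega⟩ := rfl
  rw [h1, key (t : ℕ) (by omega)]
  rfl

/-- Reindexing: a value in the pruned unfolding is a sum over embedded paths. -/
theorem valStrat_pruned_eq_sum [Fintype S] [Fintype A] (M : MDP S A) (Adv : Advice S A)
    {H : ℕ} (s₀ : S) (σT : Strategy (UState S A H) A) :
    ValStrat (prunedUnfold M Adv H) σT H (UState.root H s₀) =
      ∑ q : Path S A H, if Path.first q = s₀ then
        pathProb (prunedUnfold M Adv H) σT (embedP le_rfl q) *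
          pathReward (prunedUnfold M Adv H) (embedP le_rfl q) else 0 := by
  unfold ValStrat
  rw [← Finset.sum_subset
    (Finset.subset_univ ((Finset.univ : Finset (Path S A H)).image (embedP le_rfl)))
    ?vanish]
  case vanish =>
    intro Q _ hQ
    by_cases h1 : Path.first Q = UState.root H s₀
    · rw [if_pos h1]
      by_cases h2 : pathProb (prunedUnfold M Adv H) σT Q = 0
      · rw [h2, zero_mul]
      · exfalso
        apply hQ
        apply Finset.mem_image.mpr
        exact ⟨projP Q, Finset.mem_univ _,
          (embed_of_prob_ne_zero M Adv s₀ σT Q h1 h2).symm⟩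
    · rw [if_neg h1]
  rw [Finset.sum_image (fun q _ q' _ h => embedP_injective le_rfl h)]
  apply Finset.sum_congr rfl
  intro q _
  simp only [propext (first_embedP_iff q s₀)]

end PaperMCTS
end

namespace PaperMCTS
/-- optimal first actions of the pruned unfolding are optimal in `M`. -/
theorem pruned_opt_subset [Fintype S] [Fintype A] [Nonempty A] (M : MDP S A)
    (hM : M.IsProper) (Adv : Advice S A) (s₀ : S) (H : ℕ)
    (hRew : BoundedRewards M H)
    (hSE : StronglyEnforceable M Adv s₀ H) (hOpt : OptAssumption M Adv H) :
    optFirst (prunedUnfold M Adv H) H (UState.root H s₀) ⊆ optFirst M H s₀ := by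
  intro a ha
  obtain ⟨σT, hσT, hdetT, hvalT, hposT⟩ := ha
  obtain ⟨σE, hE⟩ := hSE
  obtain ⟨σo, hσo, hdeto, hvalo⟩ := exists_det_opt M hM H hRew s₀
  have hadv : ∀ (i : ℕ) (p : Path S A i) (b : A), 0 < σo i p b → b ∈ advStrat M Adv H i p :=
    hOpt s₀ σo hσo hdeto hvalo
  -- bounds for the pruned unfolding
  have hTP0 := prunedP_nonneg hM Adv H
  have hTP1 := prunedP_le_one hM Adv H
  have hTRw := fun Q => prunedReward_le M Adv hRew Q
  have hTB : (0 : ℝ) ≤ (H : ℝ) + 1 := by positivity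
  have hMRw : ∀ p : Path S A H, pathReward M p ≤ 1 := fun p => (hRew H p le_rfl).2
  -- pushing the optimal strategy of M into the pruned unfolding preserves its value
  have hpush : ValStrat (prunedUnfold M Adv H) (pushStrat σo) H (UState.root H s₀)
      = ValStrat M σo H s₀ := by
    rw [valStrat_pruned_eq_sum M Adv s₀ (pushStrat σo)]
    unfold ValStrat
    apply Finset.sum_congr rfl
    intro q _
    by_cases hq : Path.first q = s₀
    · rw [if_pos hq, if_pos hq, pathReward_embedP, pathProb_embedP]
      have hpull : pathProb M (pullStrat (H := H) (pushStrat (H := H) σo)) q = pathProb M σo q := by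
        unfold pathProb
        apply Finset.prod_congr rfl
        intro t _
        congr 1
        show pullStrat (H := H) (pushStrat (H := H) σo) (t : ℕ) (Path.take q (t : ℕ) t.isLt.le) (q.2 t)
          = σo (t : ℕ) (Path.take q (t : ℕ) t.isLt.le) (q.2 t)
        unfold pullStrat pushStrat
        rw [dif_pos (show (t : ℕ) ≤ H from t.isLt.le), projP_embedP]
      rw [hpull]
      by_cases hz : pathProb M σo q = 0
      · rw [hz]
        ring
      · have hfac : ∀ t : Fin H,
            0 < σo (t : ℕ) (Path.take q (t : ℕ) t.isLt.le) (q.2 t) ∧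
            0 < M.P (q.1 t.castSucc) (q.2 t) (q.1 t.succ) := by
          intro t
          have h1 := Finset.prod_ne_zero_iff.mp hz t (Finset.mem_univ t)
          have h2 := mul_ne_zero_iff.mp h1
          exact ⟨lt_of_le_of_ne (hσo.1 _ _ _) (Ne.symm h2.1),
            lt_of_le_of_ne (hM.1 _ _ _) (Ne.symm h2.2)⟩
        have hvalid : M.ValidPath q := fun t => (hfac t).2
        have hind : (∏ t : Fin H, if q.2 t ∈ advStrat M Adv H (t : ℕ)
            (Path.take q (t : ℕ) t.isLt.le) ∧ q.1 t.succ ∈ envStrat M Adv H (t : ℕ)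
            (Path.take q (t : ℕ) t.isLt.le) (q.2 t) then (1 : ℝ) else 0) = 1 := by
          apply Finset.prod_eq_one
          intro t _
          have hA : q.2 t ∈ advStrat M Adv H (t : ℕ) (Path.take q (t : ℕ) t.isLt.le) :=
            hadv (t : ℕ) (Path.take q (t : ℕ) t.isLt.le) (q.2 t) (hfac t).1
          have hEnv : q.1 t.succ ∈ envStrat M Adv H (t : ℕ)
              (Path.take q (t : ℕ) t.isLt.le) (q.2 t) := by
            apply adv_env_compat M hM hE t.isLt (M.validPath_take hvalid t.isLt.le)
              ((Path.first_take q t.isLt.le).trans hq) hA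
            rw [Path.lastState_take]
            exact (hfac t).2
          rw [if_pos ⟨hA, hEnv⟩]
        rw [hind, one_mul]
    · rw [if_neg hq, if_neg hq]
  have hValT_ge : M.Val H s₀ ≤ (prunedUnfold M Adv H).Val H (UState.root H s₀) := by
    rw [← hvalo, ← hpush]
    exact ValStrat_le_val _ hTP0 hTP1 hTB hTRw (isStrategy_pushStrat hσo) _
  -- pulling back the optimal strategy of the pruned unfolding
  have hpull1 : ValStrat (prunedUnfold M Adv H) σT H (UState.root H s₀)
      ≤ ValStrat M (pullStrat σT) H s₀ := by
    rw [valStrat_pruned_eq_sum M Adv s₀ σT]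
    unfold ValStrat
    apply Finset.sum_le_sum
    intro q _
    by_cases hq : Path.first q = s₀
    · rw [if_pos hq, if_pos hq, pathReward_embedP, pathProb_embedP]
      have hr := hRew H q le_rfl
      have hp0 : 0 ≤ pathProb M (pullStrat σT) q :=
        pathProb_nonneg M (isStrategy_pullStrat hσT).1 hM.1 q
      have hi0 : (0 : ℝ) ≤ ∏ t : Fin H, if q.2 t ∈ advStrat M Adv H (t : ℕ)
          (Path.take q (t : ℕ) t.isLt.le) ∧ q.1 t.succ ∈ envStrat M Adv H (t : ℕ)
          (Path.take q (t : ℕ) t.isLt.le) (q.2 t) then (1 : ℝ) else 0 :=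
        Finset.prod_nonneg fun t _ => by split <;> norm_num
      have hi1 : (∏ t : Fin H, if q.2 t ∈ advStrat M Adv H (t : ℕ)
          (Path.take q (t : ℕ) t.isLt.le) ∧ q.1 t.succ ∈ envStrat M Adv H (t : ℕ)
          (Path.take q (t : ℕ) t.isLt.le) (q.2 t) then (1 : ℝ) else 0) ≤ 1 := by
        apply Finset.prod_le_one
        · intro t _
          split <;> norm_num
        · intro t _
          split <;> norm_num
      calc (∏ t : Fin H, if q.2 t ∈ advStrat M Adv H (t : ℕ)
            (Path.take q (t : ℕ) t.isLt.le) ∧ q.1 t.succ ∈ envStrat M Adv H (t : ℕ)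
            (Path.take q (t : ℕ) t.isLt.le) (q.2 t) then (1 : ℝ) else 0) *
            pathProb M (pullStrat σT) q * pathReward M q
          ≤ 1 * pathProb M (pullStrat σT) q * pathReward M q := by
            apply mul_le_mul_of_nonneg_right _ hr.1
            exact mul_le_mul_of_nonneg_right hi1 hp0
        _ = pathProb M (pullStrat σT) q * pathReward M q := by ring
    · rw [if_neg hq, if_neg hq]
  -- value chain
  have hle : ValStrat M (pullStrat σT) H s₀ ≤ M.Val H s₀ :=
    ValStrat_le_val M hM.1 (fun s a s' => MDP.P_le_one hM s a s') zero_le_one hMRw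
      (isStrategy_pullStrat hσT) s₀
  have hge : M.Val H s₀ ≤ ValStrat M (pullStrat σT) H s₀ := by
    calc M.Val H s₀ ≤ (prunedUnfold M Adv H).Val H (UState.root H s₀) := hValT_ge
      _ = ValStrat (prunedUnfold M Adv H) σT H (UState.root H s₀) := hvalT.symm
      _ ≤ ValStrat M (pullStrat σT) H s₀ := hpull1
  refine ⟨pullStrat σT, isStrategy_pullStrat hσT, deterministic_pullStrat hdetT,
    le_antisymm hle hge, ?_⟩
  show 0 < pullStrat σT 0 (constPath s₀) a
  unfold pullStrat
  rw [dif_pos (Nat.zero_le H), embedP_constPath]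
  exact hposT
end PaperMCTS
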